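/- arXiv:2112.07344 — 2 statements merged into one kernel-verified Lean document; each statement's English description precedes it below -/
import Mathlib

section
/- Let φ: ℝ → ℝ be three times differentiable and M-self-concordant on an open interval, i.e., |φ'''(t)| ≤ 2M (φ''(t))^{3/2} with φ'' > 0. Then for any x, y in the interval: φ(x) ≥ φ(y) + φ'(y)(x − y) + (1/M²) ω(M √(φ''(y)) |x − y|), where ω(t) = t − ln(1+t). -/
open Set Real

private lemma mono_aux {y x : ℝ} (hyx : y ≤ x) {f f' : ℝ → ℝ}
    (hf : ∀ t ∈ Icc y x, HasDerivAt f (f' t) t)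
    (h0 : ∀ t ∈ Icc y x, 0 ≤ f' t) : f y ≤ f x := by
  have hmono : MonotoneOn f (Icc y x) :=
    monotoneOn_of_deriv_nonneg (convex_Icc y x)
      (fun t ht => (hf t ht).continuousAt.continuousWithinAt)
      (fun t ht => by
        rw [interior_Icc] at ht
        exact (hf t (Ioo_subset_Icc_self ht)).differentiableAt.differentiableWithinAt)
      (fun t ht => by
        rw [interior_Icc] at ht
        rw [(hf t (Ioo_subset_Icc_self ht)).deriv]
        exact h0 t (Ioo_subset_Icc_self ht))
  exact hmono (left_mem_Icc.2 hyx) (right_mem_Icc.2 hyx) hyx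

private lemma key (a b M : ℝ) (φ φ' φ'' φ''' : ℝ → ℝ)
    (hM : 0 < M)
    (hd1 : ∀ t ∈ Set.Ioo a b, HasDerivAt φ (φ' t) t)
    (hd2 : ∀ t ∈ Set.Ioo a b, HasDerivAt φ' (φ'' t) t)
    (hd3 : ∀ t ∈ Set.Ioo a b, HasDerivAt φ'' (φ''' t) t)
    (hpos : ∀ t ∈ Set.Ioo a b, 0 < φ'' t)
    (hsc : ∀ t ∈ Set.Ioo a b, |φ''' t| ≤ 2 * M * (φ'' t) ^ ((3 : ℝ) / 2)) :
    ∀ x ∈ Set.Ioo a b, ∀ y ∈ Set.Ioo a b, y ≤ x →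
      φ y + φ' y * (x - y) + (1 / M ^ 2) *
          (M * Real.sqrt (φ'' y) * (x - y)
            - Real.log (1 + M * Real.sqrt (φ'' y) * (x - y))) ≤ φ x := by
  intro x hx y hy hyx
  set s : ℝ := Real.sqrt (φ'' y) with hs_def
  have hs : 0 < s := Real.sqrt_pos.2 (hpos y hy)
  set c : ℝ := M * s with hc_def
  have hc : 0 < c := mul_pos hM hs
  have hsub : Icc y x ⊆ Ioo a b := Icc_subset_Ioo hy.1 hx.2
  have hden : ∀ t ∈ Icc y x, (0:ℝ) < 1 + c * (t - y) := fun t ht => by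
    nlinarith [ht.1, hc]
  -- Step A
  have hA : ∀ t ∈ Icc y x, s ^ 2 ≤ φ'' t * (1 + c * (t - y)) ^ 2 := by
    intro t ht
    have hstep : (0:ℝ) ≤ (s⁻¹ + M * (t - y) - (Real.sqrt (φ'' t))⁻¹)
        - (s⁻¹ + M * (y - y) - (Real.sqrt (φ'' y))⁻¹) := by
      have := mono_aux (f := fun u => s⁻¹ + M * (u - y) - (Real.sqrt (φ'' u))⁻¹)
        (f' := fun u => M - (-(φ''' u / (2 * Real.sqrt (φ'' u))) / (Real.sqrt (φ'' u)) ^ 2))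
        ht.1 ?_ ?_
      · linarith [this]
      · intro u hu
        have hu' : u ∈ Ioo a b := hsub ⟨hu.1, le_trans hu.2 ht.2⟩
        have hg := hpos u hu'
        have hsq : Real.sqrt (φ'' u) ≠ 0 := (Real.sqrt_pos.2 hg).ne'
        have h1 : HasDerivAt (fun v => Real.sqrt (φ'' v))
            (φ''' u / (2 * Real.sqrt (φ'' u))) u := by
          have := (Real.hasDerivAt_sqrt (ne_of_gt hg)).comp u (hd3 u hu')
          refine this.congr_deriv ?_
          field_simp
        have h2 := h1.inv hsq
        have h3 : HasDerivAt (fun v => s⁻¹ + M * (v - y)) M u := by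
          simpa using (((hasDerivAt_id u).sub_const y).const_mul M).const_add s⁻¹
        exact h3.sub h2
      · intro u hu
        have hu' : u ∈ Ioo a b := hsub ⟨hu.1, le_trans hu.2 ht.2⟩
        have hg := hpos u hu'
        have hsqp : 0 < Real.sqrt (φ'' u) := Real.sqrt_pos.2 hg
        have h32 : (φ'' u) ^ ((3:ℝ)/2) = φ'' u * Real.sqrt (φ'' u) := by
          rw [show (3:ℝ)/2 = 1 + 1/2 by norm_num, Real.rpow_add hg, Real.rpow_one,
            Real.sqrt_eq_rpow]
        have habs := hsc u hu'
        rw [h32] at habs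
        have hp : -(2 * M * (φ'' u * Real.sqrt (φ'' u))) ≤ φ''' u := neg_le_of_abs_le habs
        have hsq2 : (Real.sqrt (φ'' u)) ^ 2 = φ'' u := Real.sq_sqrt hg.le
        rw [hsq2, sub_nonneg, neg_div, neg_le, div_div]
        rw [le_div_iff₀ (by positivity)]
        nlinarith [hp]
    have hst : 0 < Real.sqrt (φ'' t) := Real.sqrt_pos.2 (hpos t (hsub ht))
    have hsimp : (Real.sqrt (φ'' t))⁻¹ ≤ s⁻¹ + M * (t - y) := by
      simp at hstep; linarith [hstep]
    have h1 : 1 ≤ Real.sqrt (φ'' t) * (s⁻¹ + M * (t - y)) := by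
      calc (1:ℝ) = Real.sqrt (φ'' t) * (Real.sqrt (φ'' t))⁻¹ := (mul_inv_cancel₀ hst.ne').symm
      _ ≤ _ := mul_le_mul_of_nonneg_left hsimp hst.le
    have h2 : s ≤ Real.sqrt (φ'' t) * (1 + c * (t - y)) := by
      calc s = s * Real.sqrt (φ'' t) * (Real.sqrt (φ'' t))⁻¹ := by field_simp
        _ ≤ s * Real.sqrt (φ'' t) * (s⁻¹ + M * (t - y)) :=
            mul_le_mul_of_nonneg_left hsimp (by positivity)
        _ = Real.sqrt (φ'' t) * (1 + c * (t - y)) := by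
            rw [hc_def]; field_simp
    calc s ^ 2 ≤ (Real.sqrt (φ'' t) * (1 + c * (t - y))) ^ 2 := by
          apply pow_le_pow_left₀ hs.le h2
      _ = φ'' t * (1 + c * (t - y)) ^ 2 := by
          rw [mul_pow, Real.sq_sqrt (hpos t (hsub ht)).le]
  -- Step B
  have hB : ∀ t ∈ Icc y x, φ' y + (s / M) * (1 - (1 + c * (t - y))⁻¹) ≤ φ' t := by
    intro t ht
    have hstep := mono_aux (f := fun u => φ' u - (φ' y + (s / M) * (1 - (1 + c * (u - y))⁻¹)))
      (f' := fun u => φ'' u - s ^ 2 / (1 + c * (u - y)) ^ 2)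
      ht.1 ?_ ?_
    · simp at hstep; linarith [hstep]
    · intro u hu
      have huI : u ∈ Icc y x := ⟨hu.1, le_trans hu.2 ht.2⟩
      have hdu := hden u huI
      have h4 : HasDerivAt (fun v => 1 + c * (v - y)) c u := by
        simpa using (((hasDerivAt_id u).sub_const y).const_mul c).const_add 1
      have h5 := h4.inv hdu.ne'
      have h6 := ((h5.const_sub 1).const_mul (s / M)).const_add (φ' y)
      have h7 := (hd2 u (hsub huI)).sub h6
      refine h7.congr_deriv ?_
      field_simp [hc_def]
      ring
    · intro u hu
      have huI : u ∈ Icc y x := ⟨hu.1, le_trans hu.2 ht.2⟩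
      have hdu := hden u huI
      rw [sub_nonneg, div_le_iff₀ (by positivity)]
      exact hA u huI
  -- Step C
  have hstep := mono_aux (f := fun t => φ t - (φ y + φ' y * (t - y) + (s / M) * (t - y)
      - (1 / M ^ 2) * Real.log (1 + c * (t - y))))
    (f' := fun t => φ' t - (φ' y + (s / M) * (1 - (1 + c * (t - y))⁻¹)))
    hyx ?_ ?_
  · simp only [sub_self, mul_zero, add_zero, Real.log_one, sub_zero, sub_nonneg] at hstep
    have hsm : (s / M) * (x - y) = (1 / M ^ 2) * (c * (x - y)) := by
      field_simp [hc_def]; ring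
    have : φ y + φ' y * (x - y) + (s / M) * (x - y)
        - (1 / M ^ 2) * Real.log (1 + c * (x - y)) ≤ φ x := by linarith [hstep]
    calc φ y + φ' y * (x - y) + 1 / M ^ 2 * (c * (x - y) - Real.log (1 + c * (x - y)))
        = φ y + φ' y * (x - y) + (s / M) * (x - y)
          - (1 / M ^ 2) * Real.log (1 + c * (x - y)) := by rw [hsm]; ring
      _ ≤ φ x := this
  · intro t ht
    have hdt := hden t ht
    have h4 : HasDerivAt (fun v => 1 + c * (v - y)) c t := by
      simpa using (((hasDerivAt_id t).sub_const y).const_mul c).const_add 1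
    have hlog := (h4.log hdt.ne').const_mul (1 / M ^ 2)
    have hlin : HasDerivAt (fun v => φ y + φ' y * (v - y) + (s / M) * (v - y))
        (φ' y + s / M) t := by
      have := ((((hasDerivAt_id t).sub_const y).const_mul (φ' y)).const_add (φ y)).add
        (((hasDerivAt_id t).sub_const y).const_mul (s / M))
      exact this.congr_deriv (by ring)
    have h7 := (hd1 t (hsub ht)).sub (hlin.sub hlog)
    refine h7.congr_deriv ?_
    rw [hc_def]
    field_simp
    ring
  · intro t ht
    exact sub_nonneg.2 (hB t ht)

/-- One-dimensional self-concordant lower bound (Nesterov, Theorem 5.1.8). -/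
theorem self_concordant_lower_bound (a b M : ℝ) (φ φ' φ'' φ''' : ℝ → ℝ)
    (hM : 0 < M)
    (hd1 : ∀ t ∈ Set.Ioo a b, HasDerivAt φ (φ' t) t)
    (hd2 : ∀ t ∈ Set.Ioo a b, HasDerivAt φ' (φ'' t) t)
    (hd3 : ∀ t ∈ Set.Ioo a b, HasDerivAt φ'' (φ''' t) t)
    (hpos : ∀ t ∈ Set.Ioo a b, 0 < φ'' t)
    (hsc : ∀ t ∈ Set.Ioo a b, |φ''' t| ≤ 2 * M * (φ'' t) ^ ((3 : ℝ) / 2)) :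
    ∀ x ∈ Set.Ioo a b, ∀ y ∈ Set.Ioo a b,
      φ y + φ' y * (x - y) + (1 / M ^ 2) *
          (M * Real.sqrt (φ'' y) * |x - y|
            - Real.log (1 + M * Real.sqrt (φ'' y) * |x - y|)) ≤ φ x := by
  intro x hx y hy
  rcases le_total y x with h | h
  · rw [abs_of_nonneg (sub_nonneg.2 h)]
    exact key a b M φ φ' φ'' φ''' hM hd1 hd2 hd3 hpos hsc x hx y hy h
  · -- reflect: apply key to ψ t = φ (-t) on Ioo (-b) (-a)
    have hmem : ∀ t : ℝ, t ∈ Ioo (-b) (-a) → -t ∈ Ioo a b := by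
      intro t ht
      simp only [Set.mem_Ioo] at ht ⊢
      constructor <;> linarith
    have hkey := key (-b) (-a) M (fun t => φ (-t)) (fun t => -φ' (-t))
      (fun t => φ'' (-t)) (fun t => -φ''' (-t)) hM
      (fun t ht => by
        have := (hd1 (-t) (hmem t ht)).comp t (hasDerivAt_neg t)
        exact this.congr_deriv (by ring))
      (fun t ht => by
        have := ((hd2 (-t) (hmem t ht)).comp t (hasDerivAt_neg t)).neg
        exact this.congr_deriv (by ring))
      (fun t ht => by
        have := ((hd3 (-t) (hmem t ht)).comp t (hasDerivAt_neg t)).neg.neg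
        exact ((hd3 (-t) (hmem t ht)).comp t (hasDerivAt_neg t)).congr_deriv (by ring))
      (fun t ht => hpos (-t) (hmem t ht))
      (fun t ht => by simpa using hsc (-t) (hmem t ht))
    have hx' : -x ∈ Ioo (-b) (-a) := by
      simp only [Set.mem_Ioo] at hx ⊢; constructor <;> linarith [hx.1, hx.2]
    have hy' : -y ∈ Ioo (-b) (-a) := by
      simp only [Set.mem_Ioo] at hy ⊢; constructor <;> linarith [hy.1, hy.2]
    have := hkey (-x) hx' (-y) hy' (by linarith)
    simp only [neg_neg] at this
    rw [abs_of_nonpos (sub_nonpos.2 h)]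
    have hxy : -x - -y = -(x - y) := by ring
    rw [hxy] at this
    calc φ y + φ' y * (x - y) + 1 / M ^ 2 *
          (M * Real.sqrt (φ'' y) * -(x - y) - Real.log (1 + M * Real.sqrt (φ'' y) * -(x - y)))
        = φ y + -φ' y * -(x - y) + 1 / M ^ 2 *
          (M * Real.sqrt (φ'' y) * -(x - y) - Real.log (1 + M * Real.sqrt (φ'' y) * -(x - y))) := by
          ring_nf
      _ ≤ φ x := this
end

section
/- Let h: ℝ → ℝ, h(θ) = √(μ² + θ²) − μ be the pseudo-Huber function with μ > 0. Then h is convex, twice continuously differentiable, h''(θ) = μ²/(μ² + θ²)^{3/2} > 0, and h satisfies the self-concordance-type inequality |h'''(θ)| ≤ (3/μ)·(μ²+θ²)^{1/4}·h''(θ)^{3/2} for all θ. -/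
open Real

lemma ph_d1 (μ : ℝ) (hμ : 0 < μ) (θ : ℝ) :
    HasDerivAt (fun θ : ℝ => Real.sqrt (μ ^ 2 + θ ^ 2) - μ)
      (θ / Real.sqrt (μ ^ 2 + θ ^ 2)) θ := by
  have hpos : 0 < μ ^ 2 + θ ^ 2 := by positivity
  have h1 : HasDerivAt (fun θ : ℝ => μ ^ 2 + θ ^ 2) (2 * θ) θ := by
    simpa using (hasDerivAt_pow 2 θ).const_add (μ ^ 2)
  have := ((Real.hasDerivAt_sqrt hpos.ne').comp θ h1).sub_const μ
  refine this.congr_deriv ?_; symm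
  have hs : Real.sqrt (μ ^ 2 + θ ^ 2) ≠ 0 := by positivity
  field_simp

lemma ph_deriv1 (μ : ℝ) (hμ : 0 < μ) :
    deriv (fun θ : ℝ => Real.sqrt (μ ^ 2 + θ ^ 2) - μ)
      = fun θ : ℝ => θ / Real.sqrt (μ ^ 2 + θ ^ 2) := by
  funext θ; exact (ph_d1 μ hμ θ).deriv

lemma rpow_32 (s : ℝ) (hs : 0 < s) : s ^ ((3:ℝ)/2) = s * Real.sqrt s := by
  rw [Real.sqrt_eq_rpow, show (3:ℝ)/2 = 1 + 1/2 by norm_num,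
    Real.rpow_add hs, Real.rpow_one]

lemma ph_d2 (μ : ℝ) (hμ : 0 < μ) (θ : ℝ) :
    HasDerivAt (fun θ : ℝ => θ / Real.sqrt (μ ^ 2 + θ ^ 2))
      (μ ^ 2 / (μ ^ 2 + θ ^ 2) ^ ((3:ℝ)/2)) θ := by
  have hpos : 0 < μ ^ 2 + θ ^ 2 := by positivity
  have hs : (0:ℝ) < Real.sqrt (μ ^ 2 + θ ^ 2) := Real.sqrt_pos.mpr hpos
  have h1 : HasDerivAt (fun θ : ℝ => μ ^ 2 + θ ^ 2) (2 * θ) θ := by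
    simpa using (hasDerivAt_pow 2 θ).const_add (μ ^ 2)
  have hsq : HasDerivAt (fun θ : ℝ => Real.sqrt (μ ^ 2 + θ ^ 2))
      (θ / Real.sqrt (μ ^ 2 + θ ^ 2)) θ := by
    have := (Real.hasDerivAt_sqrt hpos.ne').comp θ h1
    refine this.congr_deriv ?_; symm
    field_simp
  have := (hasDerivAt_id θ).div hsq hs.ne'
  refine this.congr_deriv ?_; symm
  rw [rpow_32 _ hpos]
  have hsqsq : Real.sqrt (μ ^ 2 + θ ^ 2) ^ 2 = μ ^ 2 + θ ^ 2 := Real.sq_sqrt hpos.le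
  field_simp
  simp only [id_eq, hsqsq]; ring

lemma ph_deriv2 (μ : ℝ) (hμ : 0 < μ) :
    deriv (deriv (fun θ : ℝ => Real.sqrt (μ ^ 2 + θ ^ 2) - μ))
      = fun θ : ℝ => μ ^ 2 / (μ ^ 2 + θ ^ 2) ^ ((3:ℝ)/2) := by
  rw [ph_deriv1 μ hμ]; funext θ; exact (ph_d2 μ hμ θ).deriv

lemma ph_d3 (μ : ℝ) (hμ : 0 < μ) (θ : ℝ) :
    HasDerivAt (fun θ : ℝ => μ ^ 2 / (μ ^ 2 + θ ^ 2) ^ ((3:ℝ)/2))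
      (-3 * μ ^ 2 * θ / (μ ^ 2 + θ ^ 2) ^ ((5:ℝ)/2)) θ := by
  have hpos : 0 < μ ^ 2 + θ ^ 2 := by positivity
  have h1 : HasDerivAt (fun θ : ℝ => μ ^ 2 + θ ^ 2) (2 * θ) θ := by
    simpa using (hasDerivAt_pow 2 θ).const_add (μ ^ 2)
  have h2 : HasDerivAt (fun θ : ℝ => (μ ^ 2 + θ ^ 2) ^ ((3:ℝ)/2))
      (2 * θ * ((3:ℝ)/2) * (μ ^ 2 + θ ^ 2) ^ ((3:ℝ)/2 - 1)) θ :=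
    h1.rpow_const (Or.inl hpos.ne')
  have hne : ∀ x : ℝ, 0 < μ ^ 2 + x ^ 2 := fun x => by positivity
  have h3 := (hasDerivAt_const θ (μ ^ 2)).div h2 (by positivity)
  refine h3.congr_deriv ?_; symm
  have e1 : ((μ^2+θ^2) ^ ((3:ℝ)/2)) ^ 2 = (μ^2+θ^2) ^ (3:ℝ) := by
    rw [← Real.rpow_natCast ((μ^2+θ^2) ^ ((3:ℝ)/2)) 2, ← Real.rpow_mul hpos.le]
    norm_num
  rw [show (3:ℝ)/2 - 1 = 1/2 by norm_num, e1,
    show (3:ℝ) = 1/2 + 5/2 by norm_num, Real.rpow_add hpos]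
  have hr : (0:ℝ) < (μ^2+θ^2) ^ ((1:ℝ)/2) := Real.rpow_pos_of_pos hpos _
  have hr5 : (0:ℝ) < (μ^2+θ^2) ^ ((5:ℝ)/2) := Real.rpow_pos_of_pos hpos _
  field_simp
  ring

lemma ph_deriv3 (μ : ℝ) (hμ : 0 < μ) (θ : ℝ) :
    deriv (deriv (deriv (fun θ : ℝ => Real.sqrt (μ ^ 2 + θ ^ 2) - μ))) θ
      = -3 * μ ^ 2 * θ / (μ ^ 2 + θ ^ 2) ^ ((5:ℝ)/2) := by
  rw [ph_deriv2 μ hμ]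
  exact (ph_d3 μ hμ θ).deriv

/-- Properties of the pseudo-Huber regularizer h(θ) = √(μ² + θ²) − μ. -/
theorem pseudo_huber_properties (μ : ℝ) (hμ : 0 < μ) :
    ConvexOn ℝ Set.univ (fun θ : ℝ => Real.sqrt (μ ^ 2 + θ ^ 2) - μ) ∧
    ContDiff ℝ 2 (fun θ : ℝ => Real.sqrt (μ ^ 2 + θ ^ 2) - μ) ∧
    (∀ θ : ℝ,
      deriv (deriv (fun θ : ℝ => Real.sqrt (μ ^ 2 + θ ^ 2) - μ)) θ
          = μ ^ 2 / (μ ^ 2 + θ ^ 2) ^ ((3 : ℝ) / 2) ∧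
      0 < deriv (deriv (fun θ : ℝ => Real.sqrt (μ ^ 2 + θ ^ 2) - μ)) θ) ∧
    (∀ θ : ℝ,
      |deriv (deriv (deriv (fun θ : ℝ => Real.sqrt (μ ^ 2 + θ ^ 2) - μ))) θ|
        ≤ 3 / μ * (μ ^ 2 + θ ^ 2) ^ ((1 : ℝ) / 4) *
            (deriv (deriv (fun θ : ℝ => Real.sqrt (μ ^ 2 + θ ^ 2) - μ)) θ) ^ ((3 : ℝ) / 2)) := by
  have hd2 : ∀ θ : ℝ, deriv (deriv (fun θ : ℝ => Real.sqrt (μ ^ 2 + θ ^ 2) - μ)) θ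
      = μ ^ 2 / (μ ^ 2 + θ ^ 2) ^ ((3:ℝ)/2) := fun θ => by rw [ph_deriv2 μ hμ]
  have hd2pos : ∀ θ : ℝ, 0 < deriv (deriv (fun θ : ℝ => Real.sqrt (μ ^ 2 + θ ^ 2) - μ)) θ := by
    intro θ
    rw [hd2 θ]
    have hpos : 0 < μ ^ 2 + θ ^ 2 := by positivity
    positivity
  refine ⟨?_, ?_, fun θ => ⟨hd2 θ, hd2pos θ⟩, ?_⟩
  · -- convexity
    apply convexOn_univ_of_deriv2_nonneg
    · exact fun θ => (ph_d1 μ hμ θ).differentiableAt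
    · rw [ph_deriv1 μ hμ]
      exact fun θ => (ph_d2 μ hμ θ).differentiableAt
    · intro θ
      have : (deriv^[2] (fun θ : ℝ => Real.sqrt (μ ^ 2 + θ ^ 2) - μ)) θ
          = deriv (deriv (fun θ : ℝ => Real.sqrt (μ ^ 2 + θ ^ 2) - μ)) θ := rfl
      rw [this]
      exact (hd2pos θ).le
  · -- smoothness
    have : ContDiff ℝ 2 (fun θ : ℝ => μ ^ 2 + θ ^ 2) :=
      contDiff_const.add (contDiff_id.pow 2)
    exact (this.sqrt (fun θ => by positivity)).sub contDiff_const
  · -- self-concordance bound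
    intro θ
    have hpos : 0 < μ ^ 2 + θ ^ 2 := by positivity
    rw [ph_deriv3 μ hμ θ, hd2 θ]
    set s : ℝ := μ ^ 2 + θ ^ 2 with hs
    set r : ℝ := s ^ ((1:ℝ)/4) with hrdef
    have hr : 0 < r := Real.rpow_pos_of_pos hpos _
    have hpow : ∀ n : ℕ, r ^ n = s ^ ((n : ℝ)/4) := by
      intro n
      rw [hrdef, ← Real.rpow_natCast (s ^ ((1:ℝ)/4)) n, ← Real.rpow_mul hpos.le]
      norm_num
      ring_nf
    have hr2 : r ^ 2 = s ^ ((1:ℝ)/2) := by rw [hpow 2]; norm_num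
    have hr10 : r ^ 10 = s ^ ((5:ℝ)/2) := by rw [hpow 10]; norm_num
    have hr6 : r ^ 6 = s ^ ((3:ℝ)/2) := by rw [hpow 6]; norm_num
    have hr9 : r ^ 9 = s ^ ((9:ℝ)/4) := by rw [hpow 9]; norm_num
    have hcalc : (μ ^ 2 / s ^ ((3:ℝ)/2)) ^ ((3:ℝ)/2) = μ ^ 3 / r ^ 9 := by
      rw [Real.div_rpow (by positivity) (by positivity), hr9,
        ← Real.rpow_natCast μ 2, ← Real.rpow_mul hμ.le, ← Real.rpow_mul hpos.le]
      norm_num [Real.rpow_natCast]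
    rw [hcalc]
    have key : |θ| ≤ r ^ 2 := by
      rw [hr2, ← Real.sqrt_eq_rpow]
      have h2 := Real.sqrt_le_sqrt (show θ ^ 2 ≤ s by rw [hs]; nlinarith)
      rwa [Real.sqrt_sq_eq_abs] at h2
    have habs : |-3 * μ ^ 2 * θ / s ^ ((5:ℝ)/2)| = 3 * μ ^ 2 * |θ| / r ^ 10 := by
      rw [hr10, abs_div, abs_of_pos (Real.rpow_pos_of_pos hpos _), abs_mul]
      norm_num [abs_of_nonneg (sq_nonneg μ), abs_mul]
    rw [habs]
    have hrhs : 3 / μ * r * (μ ^ 3 / r ^ 9) = 3 * μ ^ 2 / r ^ 8 := by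
      field_simp
    rw [hrhs, div_le_div_iff₀ (by positivity) (by positivity)]
    nlinarith [mul_le_mul_of_nonneg_left key (show (0:ℝ) ≤ 3 * μ ^ 2 * r ^ 8 by positivity),
      pow_pos hr 8]
end
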